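/- Let M be a finite metric space with n ≥ 2 points and 1 ≤ k ≤ n-1. Then the k-th element of the xst-spectrum equals the minimum over partitions: Σₖ = min{β(D) : D a partition of M into k+1 nonempty parts}, where β(D) = max over pairs of distinct parts of the supremum distance between them, and Σₖ is the k-th smallest edge length of a maximum spanning tree on M. -/

import Mathlib

open scoped Classical

/-- The length of a graph on a finite metric space: the sum of the distances between the
endpoints of its edges. -/
noncomputable def graphLength {M : Type*} [MetricSpace M] [Fintype M] (G : SimpleGraph M) : ℝ :=
  ∑ e ∈ G.edgeSet.toFinite.toFinset,
    Sym2.lift ⟨fun x y => dist x y, fun x y => dist_comm x y⟩ e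

/-- The length of an edge: the distance between its endpoints. -/
noncomputable def edgeLen {M : Type*} [MetricSpace M] (e : Sym2 M) : ℝ :=
  Sym2.lift ⟨fun x y => dist x y, fun x y => dist_comm x y⟩ e

/-- The length of the `i`-th edge in a list of edges (1-indexed), with the convention that the
`0`-th edge has length `0`. -/
noncomputable def edgeLenAt {M : Type*} [MetricSpace M] (E : List (Sym2 M)) : ℕ → ℝ
  | 0 => 0
  | i + 1 => (E.map edgeLen).getD i 0

/-- `P` is a partition of `X` into `m` nonempty parts. -/
def IsPartition {X : Type*} {m : ℕ} (P : Fin m → Set X) : Prop :=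
  (∀ i, (P i).Nonempty) ∧ (Pairwise fun i j => Disjoint (P i) (P j)) ∧
    (⋃ i, P i) = Set.univ

/-- `diam D`: the maximum of the diameters of the parts. -/
noncomputable def diamD {X : Type*} [MetricSpace X] {m : ℕ} (P : Fin m → Set X) : ℝ :=
  ⨆ i, Metric.diam (P i)

/-- `α(D)`: the minimum over pairs of distinct parts of the infimum distance between them. -/
noncomputable def alphaD {X : Type*} [MetricSpace X] {m : ℕ} (P : Fin m → Set X) : ℝ :=
  sInf {r : ℝ | ∃ i j, i ≠ j ∧ ∃ x ∈ P i, ∃ y ∈ P j, r = dist x y}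

/-- `β(D)`: the maximum over pairs of distinct parts of the supremum distance between them. -/
noncomputable def betaD {X : Type*} [MetricSpace X] {m : ℕ} (P : Fin m → Set X) : ℝ :=
  sSup {r : ℝ | ∃ i j, i ≠ j ∧ ∃ x ∈ P i, ∃ y ∈ P j, r = dist x y}

/-!
Let `G` be a maximum spanning tree. Deleting `j` edges from a tree leaves exactly `j + 1`
components. Given a partition `D` into `k + 1` parts, the tree edges joining different parts
therefore number at least `k`, and each has length at most `β(D)`; hence `Σₖ ≤ β(D)`.
Conversely, delete the `k` shortest tree edges and let `D` be the resulting `k + 1` components.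
Points `x`, `y` in different parts are separated by one deleted edge `e`, and exchanging `e` for
`xy` yields another spanning tree, so maximality gives `dist x y ≤ |e| ≤ Σₖ`; hence `β(D) ≤ Σₖ`.
-/

open Function SimpleGraph

namespace List

variable {α : Type*} {i : ℕ}

theorem Pairwise.getElem_le_of_mem_drop [Preorder α] {l : List α} (hl : l.Pairwise (· ≤ ·))
    (hi : i < l.length) {b : α} (hb : b ∈ l.drop i) : l[i] ≤ b := by
  have hdrop := hl.sublist (drop_sublist i l)
  rw [drop_eq_getElem_cons hi] at hb hdrop
  rcases mem_cons.1 hb with rfl | hb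
  · exact le_rfl
  · exact (pairwise_cons.1 hdrop).1 b hb

theorem Pairwise.le_getElem_of_mem_take [Preorder α] {l : List α} (hl : l.Pairwise (· ≤ ·))
    (hi : i < l.length) {b : α} (hb : b ∈ l.take (i + 1)) : b ≤ l[i] := by
  rw [take_add_one, getElem?_eq_getElem hi] at hb
  rcases mem_append.1 hb with hb | hb
  · exact hl.rel_of_mem_take_of_mem_drop hb (drop_eq_getElem_cons hi ▸ mem_cons_self)
  · rw [Option.mem_toList, Option.some_inj] at hb
    exact hb ▸ le_rfl

theorem exists_mem_drop_of_lt_card {l : List α} {F : Finset α} (hF : ∀ a ∈ F, a ∈ l)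
    (h : i < F.card) : ∃ a ∈ F, a ∈ l.drop i := by
  by_contra! hdrop
  have hFtake : F ⊆ (l.take i).toFinset := fun a ha => by
    have := hF a ha
    rw [← take_append_drop i l, mem_append] at this
    exact mem_toFinset.2 (this.resolve_right (hdrop a ha))
  have := (Finset.card_le_card hFtake).trans ((toFinset_card_le _).trans (length_take_le i l))
  omega

end List

namespace SimpleGraph

variable {V : Type*} {G : SimpleGraph V}

theorem Walk.reachable_deleteEdges_or {x y : V} (p : G.Walk x y) (u v : V) :
    (G.deleteEdges {s(u, v)}).Reachable x y ∨
      (G.deleteEdges {s(u, v)}).Reachable x u ∧ (G.deleteEdges {s(u, v)}).Reachable v y ∨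
      (G.deleteEdges {s(u, v)}).Reachable x v ∧ (G.deleteEdges {s(u, v)}).Reachable u y := by
  induction p with
  | nil => exact .inl .rfl
  | @cons x w y h p ih =>
    by_cases he : s(x, w) = s(u, v)
    · rcases Sym2.eq_iff.1 he with ⟨rfl, rfl⟩ | ⟨rfl, rfl⟩ <;>
        rcases ih with h | ⟨h₁, h₂⟩ | ⟨h₁, h₂⟩ <;> tauto
    · have hxw : (G.deleteEdges {s(u, v)}).Reachable x w := (deleteEdges_adj.2 ⟨h, he⟩).reachable
      rcases ih with h | ⟨h₁, h₂⟩ | ⟨h₁, h₂⟩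
      exacts [.inl (hxw.trans h), .inr (.inl ⟨hxw.trans h₁, h₂⟩), .inr (.inr ⟨hxw.trans h₁, h₂⟩)]

theorem IsAcyclic.not_reachable_deleteEdges_of_mem_edges (hG : G.IsAcyclic) {x y : V}
    {p : G.Walk x y} (hp : p.IsPath) {e : Sym2 V} (he : e ∈ p.edges) :
    ¬(G.deleteEdges {e}).Reachable x y := by
  cases e with | h u v =>
  rw [reachable_deleteEdges_iff_exists_walk]
  rintro ⟨q, hq⟩
  have hpq : p = q.toPath := congrArg Subtype.val ((hG.subsingleton_path x y).elim ⟨p, hp⟩ _)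
  exact hq (q.edges_toPath_subset_edges (hpq ▸ he))

theorem IsTree.isTree_deleteEdges_sup_edge (hG : G.IsTree) {e : Sym2 V} {x y : V}
    (hxy : ¬(G.deleteEdges {e}).Reachable x y) : (G.deleteEdges {e} ⊔ edge x y).IsTree := by
  cases e with | h u v =>
  set H := G.deleteEdges {s(u, v)}
  have hHT : H ≤ H ⊔ edge x y := le_sup_left
  have hxy' : (H ⊔ edge x y).Reachable x y :=
    Adj.reachable (Or.inr ((edge_adj ..).2 ⟨.inl ⟨rfl, rfl⟩, fun h => hxy (h ▸ .rfl)⟩))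
  -- the separated vertices `x` and `y` lie on opposite sides of `s(u, v)`
  have huv : (H ⊔ edge x y).Reachable u v := by
    rcases (hG.connected.preconnected x y).some.reachable_deleteEdges_or u v with
      h | ⟨hxu, hvy⟩ | ⟨hxv, huy⟩
    · exact absurd h hxy
    · exact (hxu.mono hHT).symm.trans (hxy'.trans (hvy.mono hHT).symm)
    · exact (huy.mono hHT).trans (hxy'.symm.trans (hxv.mono hHT))
  have hu (a : V) : (H ⊔ edge x y).Reachable a u := by
    rcases (hG.connected.preconnected a u).some.reachable_deleteEdges_or u v with
      h | ⟨h, -⟩ | ⟨h, -⟩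
    exacts [h.mono hHT, h.mono hHT, (h.mono hHT).trans huv.symm]
  refine ⟨(connected_iff_exists_forall_reachable _).2 ⟨u, fun a => (hu a).symm⟩, ?_⟩
  exact (hG.isAcyclic.anti (deleteEdges_le _)).sup_edge_of_not_reachable hxy

theorem Connected.card_connectedComponent (hG : G.Connected) :
    Nat.card G.ConnectedComponent = 1 :=
  Nat.card_eq_one_iff_unique.2 ⟨hG.preconnected.subsingleton_connectedComponent,
    hG.nonempty.map G.connectedComponentMk⟩

theorem IsTree.length_add_one_eq_card [Fintype V] (hG : G.IsTree)
    {E : List (Sym2 V)} (hE : ∀ e, e ∈ E ↔ e ∈ G.edgeSet) (hnd : E.Nodup) :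
    E.length + 1 = Fintype.card V := by
  rw [← List.toFinset_card_of_nodup hnd, ← hG.card_edgeFinset]
  congr 2
  ext e
  simp [hE]

variable [Finite V]

theorem card_connectedComponent_deleteEdges_of_isBridge {u v : V} (hadj : G.Adj u v)
    (hb : G.IsBridge s(u, v)) :
    Nat.card (G.deleteEdges {s(u, v)}).ConnectedComponent = Nat.card G.ConnectedComponent + 1 := by
  set H := G.deleteEdges {s(u, v)}
  let φ : H.ConnectedComponent → G.ConnectedComponent :=
    ConnectedComponent.map (Hom.ofLE (deleteEdges_le _))
  have hφ (a : V) : φ (H.connectedComponentMk a) = G.connectedComponentMk a := rfl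
  -- the component of `v` is the extra one; on the others `φ` is injective
  let ψ (c : H.ConnectedComponent) : Option G.ConnectedComponent :=
    if c = H.connectedComponentMk v then none else some (φ c)
  have hψ : Bijective ψ := by
    constructor
    · intro c d hcd
      induction c using ConnectedComponent.ind with | h a =>
      induction d using ConnectedComponent.ind with | h b =>
      simp only [ψ] at hcd
      split_ifs at hcd with hav hbv hbv
      · rw [hav, hbv]
      obtain ⟨p⟩ := ConnectedComponent.exact (Option.some_injective _ hcd)
      rcases p.reachable_deleteEdges_or u v with h | ⟨-, h⟩ | ⟨h, -⟩
      · exact ConnectedComponent.sound h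
      · exact absurd (ConnectedComponent.sound h.symm) hbv
      · exact absurd (ConnectedComponent.sound h) hav
    · rintro (_ | g)
      · exact ⟨_, if_pos rfl⟩
      induction g using ConnectedComponent.ind with | h a =>
      by_cases ha : H.connectedComponentMk a = H.connectedComponentMk v
      · refine ⟨H.connectedComponentMk u, ?_⟩
        simp only [ψ]
        rw [if_neg fun h => hb (ConnectedComponent.exact h), hφ, ← hφ a, ha]
        exact congrArg some (ConnectedComponent.sound hadj.reachable)
      · exact ⟨_, if_neg ha⟩
  rw [Nat.card_eq_of_bijective ψ hψ, Finite.card_option]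

theorem IsAcyclic.card_connectedComponent_deleteEdges (hG : G.IsAcyclic) (F : Finset (Sym2 V))
    (hF : ↑F ⊆ G.edgeSet) :
    Nat.card (G.deleteEdges ↑F).ConnectedComponent = Nat.card G.ConnectedComponent + F.card := by
  induction F using Finset.induction_on with
  | empty => simp
  | insert e F he ih =>
    rw [Finset.coe_insert, Set.insert_subset_iff] at hF
    have heF : e ∈ (G.deleteEdges ↑F).edgeSet := by
      rw [edgeSet_deleteEdges]
      exact ⟨hF.1, he⟩
    cases e with | h u v =>
    rw [Finset.coe_insert, Set.insert_eq, Set.union_comm, ← deleteEdges_deleteEdges,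
      card_connectedComponent_deleteEdges_of_isBridge heF
        (isAcyclic_iff_forall_isBridge.1 (hG.anti (deleteEdges_le _)) heF),
      ih hF.2, Finset.card_insert_of_notMem he, add_assoc]

theorem card_le_card_connectedComponent_deleteEdges {α : Type*} {f : V → α} (hf : Surjective f)
    {S : Set (Sym2 V)} (hS : ∀ a b, G.Adj a b → f a ≠ f b → s(a, b) ∈ S) :
    Nat.card α ≤ Nat.card (G.deleteEdges S).ConnectedComponent := by
  have hconst {a b : V} (p : (G.deleteEdges S).Walk a b) : f a = f b := by
    induction p with
    | nil => rfl
    | cons h _ ih =>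
      obtain ⟨hadj, hnS⟩ := deleteEdges_adj.1 h
      exact (not_not.1 fun hne => hnS (hS _ _ hadj hne)).trans ih
  refine Nat.card_le_card_of_surjective (ConnectedComponent.lift f fun a b p _ => hconst p) ?_
  intro i
  obtain ⟨a, rfl⟩ := hf i
  exact ⟨(G.deleteEdges S).connectedComponentMk a, rfl⟩

end SimpleGraph

section Partition

variable {X : Type*} {m : ℕ}

theorem IsPartition.exists_surjective {P : Fin m → Set X} (hP : IsPartition P) :
    ∃ f : X → Fin m, Surjective f ∧ ∀ x, x ∈ P (f x) := by
  obtain ⟨hne, hdisj, hcover⟩ := hP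
  choose f hf using fun x => Set.mem_iUnion.1 (hcover ▸ Set.mem_univ x)
  refine ⟨f, fun i => ?_, hf⟩
  obtain ⟨x, hx⟩ := hne i
  exact ⟨x, by_contra fun h => Set.disjoint_left.1 (hdisj h) (hf x) hx⟩

theorem isPartition_fibers {f : X → Fin m} (hf : Surjective f) :
    IsPartition fun i => f ⁻¹' {i} := by
  refine ⟨fun i => hf i, fun i j hij => Set.disjoint_singleton.2 hij |>.preimage f, ?_⟩
  exact Set.eq_univ_of_forall fun x => Set.mem_iUnion.2 ⟨f x, rfl⟩

variable [MetricSpace X] {P : Fin m → Set X}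

theorem dist_le_betaD [Finite X] {i j : Fin m} (hij : i ≠ j) {x y : X} (hx : x ∈ P i)
    (hy : y ∈ P j) : dist x y ≤ betaD P := by
  refine le_csSup ?_ ⟨i, j, hij, x, hx, y, hy, rfl⟩
  refine (Set.finite_range fun p : X × X => dist p.1 p.2).bddAbove.mono ?_
  rintro _ ⟨i, j, -, x, -, y, -, rfl⟩
  exact ⟨(x, y), rfl⟩

theorem betaD_le {b : ℝ} (hb : 0 ≤ b)
    (h : ∀ i j, i ≠ j → ∀ x ∈ P i, ∀ y ∈ P j, dist x y ≤ b) : betaD P ≤ b := by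
  refine Real.sSup_le ?_ hb
  rintro _ ⟨i, j, hij, x, hx, y, hy, rfl⟩
  exact h i j hij x hx y hy

end Partition

section MaxSpanningTree

variable {M : Type*} [MetricSpace M]

theorem edgeLen_nonneg (e : Sym2 M) : 0 ≤ edgeLen e := by
  cases e with | h x y => exact dist_nonneg

theorem edgeLenAt_nonneg (E : List (Sym2 M)) (i : ℕ) : 0 ≤ edgeLenAt E i := by
  cases i with
  | zero => exact le_rfl
  | succ i =>
    simp only [edgeLenAt, List.getD_eq_getElem?_getD, List.getElem?_map]
    cases E[i]? <;> simp [edgeLen_nonneg]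

variable {E : List (Sym2 M)}

theorem edgeLenAt_succ_le_of_mem_drop (hsorted : (E.map edgeLen).Pairwise (· ≤ ·)) {k : ℕ}
    {e : Sym2 M} (he : e ∈ E.drop k) : edgeLenAt E (k + 1) ≤ edgeLen e := by
  have hk : k < (E.map edgeLen).length := by
    rw [List.length_map]
    by_contra! h
    simp [List.drop_eq_nil_of_le h] at he
  rw [edgeLenAt, ← List.getElem_eq_getD (h := hk)]
  exact hsorted.getElem_le_of_mem_drop hk (List.map_drop ▸ List.mem_map_of_mem he)

theorem edgeLen_le_edgeLenAt_succ_of_mem_take (hsorted : (E.map edgeLen).Pairwise (· ≤ ·))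
    {k : ℕ} (hk : k < E.length) {e : Sym2 M} (he : e ∈ E.take (k + 1)) :
    edgeLen e ≤ edgeLenAt E (k + 1) := by
  rw [edgeLenAt, ← List.getElem_eq_getD (h := by simpa using hk)]
  exact hsorted.le_getElem_of_mem_take _ (List.map_take ▸ List.mem_map_of_mem he)

variable [Fintype M] {G : SimpleGraph M}

def IsMaxSpanningTree (G : SimpleGraph M) : Prop :=
  G.IsTree ∧ ∀ T : SimpleGraph M, T.IsTree → graphLength T ≤ graphLength G

theorem graphLength_deleteEdges_sup_edge {e : Sym2 M} (he : e ∈ G.edgeSet) {x y : M}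
    (hxy : x ≠ y) (hnadj : ¬(G.deleteEdges {e}).Adj x y) :
    graphLength (G.deleteEdges {e} ⊔ edge x y) = graphLength G - edgeLen e + dist x y := by
  have hedges : (G.deleteEdges {e} ⊔ edge x y).edgeSet.toFinite.toFinset =
      insert s(x, y) (G.edgeSet.toFinite.toFinset.erase e) := by
    ext e'
    simp [edgeSet_sup, edgeSet_deleteEdges, edgeSet_edge_of_ne hxy, and_comm]
  have hxyG : s(x, y) ∉ G.edgeSet.toFinite.toFinset.erase e := by
    simpa [and_comm] using hnadj
  rw [graphLength, graphLength, hedges, Finset.sum_insert hxyG,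
    Finset.sum_erase_eq_sub (by simpa using he)]
  simp only [Sym2.lift_mk, edgeLen]
  ring

theorem IsMaxSpanningTree.dist_le_edgeLen (hG : IsMaxSpanningTree G) {e : Sym2 M}
    (he : e ∈ G.edgeSet) {x y : M} (hxy : ¬(G.deleteEdges {e}).Reachable x y) :
    dist x y ≤ edgeLen e := by
  have hne : x ≠ y := by rintro rfl; exact hxy .rfl
  have := hG.2 _ (hG.1.isTree_deleteEdges_sup_edge hxy)
  rw [graphLength_deleteEdges_sup_edge he hne fun h => hxy h.reachable] at this
  linarith

theorem IsMaxSpanningTree.exists_dist_le_edgeLen (hG : IsMaxSpanningTree G) {S : Set (Sym2 M)}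
    {x y : M} (hxy : ¬(G.deleteEdges S).Reachable x y) : ∃ e ∈ S, dist x y ≤ edgeLen e := by
  obtain ⟨p, hp⟩ := (hG.1.connected.preconnected x y).some.toPath
  obtain ⟨e, heS, hep⟩ := p.exists_mem_edges_of_not_reachable_deleteEdges hxy
  exact ⟨e, heS, hG.dist_le_edgeLen (p.edges_subset_edgeSet hep)
    (hG.1.isAcyclic.not_reachable_deleteEdges_of_mem_edges hp hep)⟩

theorem edgeLenAt_succ_le_betaD (hG : G.IsTree) (hE : ∀ e, e ∈ E ↔ e ∈ G.edgeSet)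
    (hsorted : (E.map edgeLen).Pairwise (· ≤ ·)) {k : ℕ} {P : Fin (k + 1 + 1) → Set M}
    (hP : IsPartition P) : edgeLenAt E (k + 1) ≤ betaD P := by
  obtain ⟨f, hf, hPf⟩ := hP.exists_surjective
  let F := G.edgeFinset.filter fun e => ¬(e.map f).IsDiag
  have hFG : ↑F ⊆ G.edgeSet := fun e he => mem_edgeFinset.1 (Finset.mem_filter.1 he).1
  -- the tree edges between different parts cut the tree into at least `k + 2` pieces
  have hF : k < F.card := by
    have := card_le_card_connectedComponent_deleteEdges hf (G := G) (S := ↑F)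
      fun a b hab hne => by simp [F, hab, hne]
    rw [hG.isAcyclic.card_connectedComponent_deleteEdges F hFG,
      hG.connected.card_connectedComponent] at this
    simp only [Nat.card_eq_fintype_card, Fintype.card_fin] at this
    omega
  obtain ⟨e, heF, heE⟩ := List.exists_mem_drop_of_lt_card (fun e he => (hE e).2 (hFG he)) hF
  cases e with | h x y =>
  have hxy : f x ≠ f y := by simpa [F] using (Finset.mem_filter.1 heF).2
  exact (edgeLenAt_succ_le_of_mem_drop hsorted heE).trans
    (dist_le_betaD hxy (hPf x) (hPf y))

theorem IsMaxSpanningTree.exists_isPartition_betaD_le (hG : IsMaxSpanningTree G)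
    (hE : ∀ e, e ∈ E ↔ e ∈ G.edgeSet) (hnd : E.Nodup) (hsorted : (E.map edgeLen).Pairwise (· ≤ ·))
    {k : ℕ} (hk : k + 1 + 1 ≤ Fintype.card M) :
    ∃ P : Fin (k + 1 + 1) → Set M, IsPartition P ∧ betaD P ≤ edgeLenAt E (k + 1) := by
  have hlen : k < E.length := by
    have := hG.1.length_add_one_eq_card hE hnd
    omega
  -- deleting the `k + 1` shortest edges leaves `k + 2` components: these are the parts
  let R := (E.take (k + 1)).toFinset
  have hRG : ↑R ⊆ G.edgeSet := fun e he =>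
    (hE e).1 (List.mem_of_mem_take (List.mem_toFinset.1 he))
  have hR : R.card = k + 1 := by
    rw [List.toFinset_card_of_nodup (hnd.sublist (List.take_sublist _ _)), List.length_take]
    omega
  let H := G.deleteEdges ↑R
  have hH : Nat.card H.ConnectedComponent = k + 1 + 1 := by
    rw [hG.1.isAcyclic.card_connectedComponent_deleteEdges R hRG, hR,
      hG.1.connected.card_connectedComponent, add_comm]
  let φ := Finite.equivFinOfCardEq hH
  refine ⟨fun i => (φ ∘ H.connectedComponentMk) ⁻¹' {i},
    isPartition_fibers (φ.surjective.comp fun c => c.exists_rep), ?_⟩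
  refine betaD_le (edgeLenAt_nonneg E _) ?_
  rintro i j hij x rfl y rfl
  have hxy : ¬H.Reachable x y := fun h => hij (congrArg φ (ConnectedComponent.sound h))
  obtain ⟨e, heR, hle⟩ := hG.exists_dist_le_edgeLen hxy
  exact hle.trans (edgeLen_le_edgeLenAt_succ_of_mem_take hsorted hlen (List.mem_toFinset.1 heR))

end MaxSpanningTree

theorem stmt_19_general {M : Type*} [MetricSpace M] [Fintype M]
    (G : SimpleGraph M) (hG : G.IsTree)
    (hmax : ∀ T : SimpleGraph M, T.IsTree → graphLength T ≤ graphLength G)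
    (E : List (Sym2 M)) (hE : ∀ e, e ∈ E ↔ e ∈ G.edgeSet) (hnd : E.Nodup)
    (hsorted : (E.map edgeLen).Pairwise (· ≤ ·))
    {k : ℕ} (hk1 : 1 ≤ k) (hk2 : k + 1 ≤ Fintype.card M) :
    edgeLenAt E k =
      sInf {r : ℝ | ∃ P : Fin (k + 1) → Set M, IsPartition P ∧ r = betaD P} := by
  obtain ⟨k, rfl⟩ := Nat.exists_eq_add_of_le' hk1
  have hGmax : IsMaxSpanningTree G := ⟨hG, hmax⟩
  obtain ⟨P, hP, hβ⟩ := hGmax.exists_isPartition_betaD_le hE hnd hsorted hk2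
  have hlower : edgeLenAt E (k + 1) ∈
      lowerBounds {r : ℝ | ∃ P : Fin (k + 1 + 1) → Set M, IsPartition P ∧ r = betaD P} := by
    rintro _ ⟨Q, hQ, rfl⟩
    exact edgeLenAt_succ_le_betaD hG hE hsorted hQ
  refine (IsLeast.csInf_eq ⟨?_, hlower⟩).symm
  exact ⟨P, hP, le_antisymm (hlower ⟨P, hP, rfl⟩) hβ⟩

theorem stmt_19 {M : Type*} [MetricSpace M] [Fintype M] (hn : 2 ≤ Fintype.card M)
    (G : SimpleGraph M) (hG : G.IsTree)
    (hmax : ∀ T : SimpleGraph M, T.IsTree → graphLength T ≤ graphLength G)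
    (E : List (Sym2 M)) (hE : ∀ e, e ∈ E ↔ e ∈ G.edgeSet) (hnd : E.Nodup)
    (hsorted : (E.map edgeLen).Pairwise (· ≤ ·))
    {k : ℕ} (hk1 : 1 ≤ k) (hk2 : k + 1 ≤ Fintype.card M) :
    edgeLenAt E k =
      sInf {r : ℝ | ∃ P : Fin (k + 1) → Set M, IsPartition P ∧ r = betaD P} :=
  stmt_19_general G hG hmax E hE hnd hsorted hk1 hk2
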